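/- Let Δ be the discrete Laplacian on ℓ²(ℤ²), let Δ₁, Δ₂ be the coordinate Laplacians (Δ_iu)(n) := 2u(n) − u(n−e_i) − u(n+e_i), and set B := Δ₁(4−Δ₁) + Δ₂(4−Δ₂), the bounded extension of [Δ, iA₀]. Let ε ∈ (0,2) and let I = (ε, 4−ε) or I = (4+ε, 8−ε). Then for every real-valued continuous function θ : ℝ → ℝ vanishing outside I, the strict Mourre estimate θ(Δ)·B·θ(Δ) ≥ ε(4−ε)·θ(Δ)² holds (i.e. θ(Δ)Bθ(Δ) − ε(4−ε)θ(Δ)² is a positive semidefinite operator), where θ(Δ) is defined by the continuous functional calculus of the bounded self-adjoint operator Δ. -/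

import Mathlib

/-!
Let `Sᵢ` be the unitary translation by `eᵢ`. Then `Δ = Δ₁ + Δ₂`, `Δᵢ = (1 - Sᵢ)(1 - Sᵢ)*` and
`4 - Δᵢ = (1 + Sᵢ)(1 + Sᵢ)*`, and since the translations commute with each other and with their
adjoints, `Δ₁Δ₂ = MM*` with `M = (1 - S₁)(1 - S₂)`; likewise for `(4 - Δ₁)(4 - Δ₂)`. Hence in
`B = Δ(4 - Δ) + (Δ₁Δ₂ + Δ₂Δ₁) = (8 - Δ)(Δ - 4) + ((4 - Δ₁)(4 - Δ₂) + (4 - Δ₂)(4 - Δ₁))`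
the anticommutators stay nonnegative after conjugation by `θ(Δ)`, and the first term is handled by
the functional calculus: `x(4 - x) - ε(4 - ε) = (x - ε)(4 - ε - x) ≥ 0` on `(ε, 4 - ε)`. The
upper interval is the image of the lower one under `Δᵢ ↦ 4 - Δᵢ`, `Δ ↦ 8 - Δ`.
-/

noncomputable section

open scoped ENNReal

/-- The Hilbert space ℓ²(ℤ²). -/
abbrev l2Z2 : Type := lp (fun _ : Fin 2 → ℤ => ℂ) 2

instance l2Z2_cfcReal : ContinuousFunctionalCalculus ℝ (l2Z2 →L[ℂ] l2Z2) IsSelfAdjoint :=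
  IsSelfAdjoint.instContinuousFunctionalCalculus

section StarRing

variable {R : Type*} [Ring R]

theorem Commute.one_sub_one_sub {a b : R} (h : Commute a b) : Commute (1 - a) (1 - b) :=
  (Commute.one_left _).sub_left ((Commute.one_right a).sub_right h)

variable [StarRing R]

theorem two_sub_sub_star_eq_mul_star {S : R} (hS : S * star S = 1) :
    2 - S - star S = (1 - S) * star (1 - S) := by
  rw [star_sub, star_one, mul_sub, sub_mul, sub_mul, hS, ← one_add_one_eq_two]
  noncomm_ring

variable [PartialOrder R] [StarOrderedRing R]

theorem mul_star_self_mul_mul_star_self_nonneg {a b : R} (hab : Commute a b)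
    (hab' : Commute a (star b)) : 0 ≤ a * star a * (b * star b) := by
  have hba : Commute (star a) (b * star b) :=
    (by simpa using hab'.star_star : Commute (star a) b).mul_right hab.star_star
  have : a * star a * (b * star b) = a * b * star (a * b) := by
    rw [star_mul, mul_assoc, hba.eq]
    noncomm_ring
  exact this ▸ mul_star_self_nonneg (a * b)

theorem mul_star_self_anticomm_nonneg {a b : R} (hab : Commute a b)
    (hab' : Commute a (star b)) :
    0 ≤ a * star a * (b * star b) + b * star b * (a * star a) :=
  add_nonneg (mul_star_self_mul_mul_star_self_nonneg hab hab')
    (mul_star_self_mul_mul_star_self_nonneg hab.symm (by simpa using hab'.star_star.symm))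

theorem two_sub_sub_star_anticomm_nonneg {S T : R} (hS : S * star S = 1) (hT : T * star T = 1)
    (hST : Commute S T) (hST' : Commute S (star T)) :
    0 ≤ (2 - S - star S) * (2 - T - star T) + (2 - T - star T) * (2 - S - star S) := by
  rw [two_sub_sub_star_eq_mul_star hS, two_sub_sub_star_eq_mul_star hT]
  refine mul_star_self_anticomm_nonneg hST.one_sub_one_sub ?_
  rw [star_sub, star_one]
  exact hST'.one_sub_one_sub

theorem four_sub_two_sub_sub_star_anticomm_nonneg {S T : R} (hS : S * star S = 1)
    (hT : T * star T = 1) (hST : Commute S T) (hST' : Commute S (star T)) :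
    0 ≤ (4 - (2 - S - star S)) * (4 - (2 - T - star T)) +
      (4 - (2 - T - star T)) * (4 - (2 - S - star S)) := by
  have hrefl : ∀ U : R, 4 - (2 - U - star U) = 2 - -U - star (-U) := fun U => by
    rw [star_neg, show (4 : R) = 2 + 2 by norm_num]; abel
  rw [hrefl, hrefl]
  refine two_sub_sub_star_anticomm_nonneg ?_ ?_ hST.neg_left.neg_right ?_
  · rwa [star_neg, neg_mul_neg]
  · rwa [star_neg, neg_mul_neg]
  · rw [star_neg]; exact hST'.neg_left.neg_right

end StarRing

section CStarAlgebra

variable {A : Type*} [CStarAlgebra A] [PartialOrder A] [StarOrderedRing A]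

theorem cfc_mul_cfc_mul_cfc_sub_smul_sq_nonneg (a : A) {f g : ℝ → ℝ} {c : ℝ}
    (h : ∀ x ∈ spectrum ℝ a, f x ≠ 0 → c ≤ g x)
    (hf : ContinuousOn f (spectrum ℝ a) := by cfc_cont_tac)
    (hg : ContinuousOn g (spectrum ℝ a) := by cfc_cont_tac)
    (ha : IsSelfAdjoint a := by cfc_tac) :
    0 ≤ cfc f a * cfc g a * cfc f a - c • cfc f a ^ 2 := by
  rw [← cfc_mul f g a, ← cfc_mul _ f a, ← cfc_pow f 2 a, ← cfc_smul c _ a, ← cfc_sub _ _ a]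
  refine cfc_nonneg fun x hx => ?_
  have hfactor : f x * g x * f x - c • f x ^ 2 = f x ^ 2 * (g x - c) := by
    rw [smul_eq_mul]; ring
  rw [hfactor]
  by_cases hfx : f x = 0
  · simp [hfx]
  · exact mul_nonneg (sq_nonneg _) (sub_nonneg.mpr (h x hx hfx))

theorem strict_mourre_of_anticomm_nonneg (d₁ d₂ : A) (hd : IsSelfAdjoint (d₁ + d₂))
    (hcross : 0 ≤ d₁ * d₂ + d₂ * d₁) {ε : ℝ} {θ : ℝ → ℝ} (hθ : Continuous θ)
    (hθI : ∀ x ∉ Set.Ioo ε (4 - ε), θ x = 0) :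
    0 ≤ cfc θ (d₁ + d₂) * (d₁ * (4 - d₁) + d₂ * (4 - d₂)) * cfc θ (d₁ + d₂) -
      (ε * (4 - ε)) • cfc θ (d₁ + d₂) ^ 2 := by
  set d := d₁ + d₂ with hd_def
  set T := cfc θ d
  have hB : d₁ * (4 - d₁) + d₂ * (4 - d₂) =
      cfc (fun x : ℝ => x * (4 - x)) d + (d₁ * d₂ + d₂ * d₁) := by
    rw [cfc_mul _ _ d, cfc_sub _ _ d, cfc_id' ℝ d, cfc_const (4 : ℝ) d, map_ofNat, hd_def]
    noncomm_ring
  have hmain : 0 ≤ T * cfc (fun x : ℝ => x * (4 - x)) d * T - (ε * (4 - ε)) • T ^ 2 := by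
    refine cfc_mul_cfc_mul_cfc_sub_smul_sq_nonneg d fun x _ hx => ?_
    obtain ⟨h₁, h₂⟩ := not_not.mp (mt (hθI x) hx)
    nlinarith
  calc (0 : A) ≤ (T * cfc (fun x : ℝ => x * (4 - x)) d * T - (ε * (4 - ε)) • T ^ 2) +
        T * (d₁ * d₂ + d₂ * d₁) * T :=
        add_nonneg hmain ((cfc_predicate θ d).conjugate_nonneg hcross)
    _ = _ := by rw [hB]; noncomm_ring

theorem strict_mourre_of_anticomm_nonneg_reflected (d₁ d₂ : A) (hd : IsSelfAdjoint (d₁ + d₂))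
    (hcross : 0 ≤ (4 - d₁) * (4 - d₂) + (4 - d₂) * (4 - d₁)) {ε : ℝ} {θ : ℝ → ℝ}
    (hθ : Continuous θ) (hθI : ∀ x ∉ Set.Ioo (4 + ε) (8 - ε), θ x = 0) :
    0 ≤ cfc θ (d₁ + d₂) * (d₁ * (4 - d₁) + d₂ * (4 - d₂)) * cfc θ (d₁ + d₂) -
      (ε * (4 - ε)) • cfc θ (d₁ + d₂) ^ 2 := by
  have hrefl : 8 - (d₁ + d₂) = 4 - d₁ + (4 - d₂) := by
    rw [show (8 : A) = 4 + 4 by norm_num]; abel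
  have hd' : IsSelfAdjoint (4 - d₁ + (4 - d₂)) := hrefl ▸ (IsSelfAdjoint.ofNat 8).sub hd
  have hT : cfc θ (d₁ + d₂) = cfc (fun x => θ (8 - x)) (4 - d₁ + (4 - d₂)) := by
    rw [cfc_comp' θ (8 - ·) _, cfc_sub _ _ _, cfc_const (8 : ℝ) _, cfc_id' ℝ _, map_ofNat, ← hrefl,
      sub_sub_cancel]
  have hB : d₁ * (4 - d₁) + d₂ * (4 - d₂) =
      (4 - d₁) * (4 - (4 - d₁)) + (4 - d₂) * (4 - (4 - d₂)) := by
    noncomm_ring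
  rw [hT, hB]
  refine strict_mourre_of_anticomm_nonneg _ _ hd' hcross (by fun_prop) fun x hx => hθI _ ?_
  contrapose! hx
  constructor <;> linarith [hx.1, hx.2]

end CStarAlgebra

theorem Function.update_add_eq_add_single {ι M : Type*} [DecidableEq ι] [AddZeroClass M]
    (n : ι → M) (i : ι) (c : M) : Function.update n i (n i + c) = n + Pi.single i c := by
  ext j
  rcases eq_or_ne j i with rfl | hj
  · simp
  · simp [hj]

theorem Memℓp.comp_equiv {ι κ E : Type*} [NormedAddCommGroup E] {p : ENNReal} {f : ι → E}
    (hf : Memℓp f p) (σ : κ ≃ ι) (hp : 0 < p.toReal) : Memℓp (f ∘ σ) p :=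
  (memℓp_gen_iff hp).2 <| σ.summable_iff.2 <| (memℓp_gen_iff hp).1 hf

section Translation

variable {𝕜 E G : Type*} [RCLike 𝕜] [NormedAddCommGroup E] [InnerProductSpace 𝕜 E]

def l2Translate [AddGroup G] (v : G) : lp (fun _ : G => E) 2 →L[𝕜] lp (fun _ : G => E) 2 :=
  LinearIsometry.toContinuousLinearMap
    { toFun u := ⟨fun n => u (n + v), (lp.memℓp u).comp_equiv (Equiv.addRight v) (by norm_num)⟩
      map_add' _ _ := rfl
      map_smul' _ _ := rfl
      norm_map' u := by
        rw [lp.norm_eq_tsum_rpow (by norm_num), lp.norm_eq_tsum_rpow (by norm_num)]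
        exact congrArg (· ^ _) ((Equiv.addRight v).tsum_eq fun n => ‖u n‖ ^ _) }

@[simp]
theorem l2Translate_apply [AddGroup G] (v : G) (u : lp (fun _ : G => E) 2) (n : G) :
    l2Translate (𝕜 := 𝕜) v u n = u (n + v) :=
  rfl

theorem l2Translate_mul [AddGroup G] (v w : G) :
    l2Translate (𝕜 := 𝕜) (E := E) v * l2Translate w = l2Translate (v + w) := by
  ext u n
  simp [add_assoc]

theorem l2Translate_zero [AddGroup G] : l2Translate (𝕜 := 𝕜) (E := E) (0 : G) = 1 := by
  ext u n
  simp

theorem star_l2Translate [CompleteSpace E] [AddGroup G] (v : G) :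
    star (l2Translate (𝕜 := 𝕜) (E := E) v) = l2Translate (-v) := by
  rw [ContinuousLinearMap.star_eq_adjoint, eq_comm, ContinuousLinearMap.eq_adjoint_iff]
  intro x y
  rw [lp.inner_eq_tsum, lp.inner_eq_tsum, ← (Equiv.addRight v).tsum_eq]
  simp

theorem l2Translate_mul_star [CompleteSpace E] [AddGroup G] (v : G) :
    l2Translate (𝕜 := 𝕜) (E := E) v * star (l2Translate v) = 1 := by
  rw [star_l2Translate, l2Translate_mul, add_neg_cancel, l2Translate_zero]

theorem l2Translate_commute [AddCommGroup G] (v w : G) :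
    Commute (l2Translate (𝕜 := 𝕜) (E := E) v) (l2Translate w) := by
  rw [Commute, SemiconjBy, l2Translate_mul, l2Translate_mul, add_comm]

theorem eq_two_sub_l2Translate_sub_star {ι : Type*} [DecidableEq ι] (i : ι)
    (D : lp (fun _ : ι → ℤ => 𝕜) 2 →L[𝕜] lp (fun _ : ι → ℤ => 𝕜) 2)
    (hD : ∀ u n, D u n = 2 * u n - u (Function.update n i (n i + 1)) -
      u (Function.update n i (n i - 1))) :
    D = 2 - l2Translate (Pi.single i 1) - star (l2Translate (Pi.single i 1)) := by
  ext u n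
  rw [hD, sub_eq_add_neg (n i), Function.update_add_eq_add_single,
    Function.update_add_eq_add_single, star_l2Translate, Pi.single_neg]
  simp [two_mul]

end Translation

theorem strict_mourre_2d_general (Δop Δ1 Δ2 : l2Z2 →L[ℂ] l2Z2)
    (hΔ : ∀ (u : l2Z2) (n : Fin 2 → ℤ), (Δop u) n = ∑ i : Fin 2,
      (2 * u n - u (Function.update n i (n i + 1)) - u (Function.update n i (n i - 1))))
    (hΔ1 : ∀ (u : l2Z2) (n : Fin 2 → ℤ), (Δ1 u) n =
      2 * u n - u (Function.update n 0 (n 0 + 1)) - u (Function.update n 0 (n 0 - 1)))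
    (hΔ2 : ∀ (u : l2Z2) (n : Fin 2 → ℤ), (Δ2 u) n =
      2 * u n - u (Function.update n 1 (n 1 + 1)) - u (Function.update n 1 (n 1 - 1)))
    (ε : ℝ) (I : Set ℝ)
    (hI : I = Set.Ioo ε (4 - ε) ∨ I = Set.Ioo (4 + ε) (8 - ε))
    (θ : ℝ → ℝ) (hθc : Continuous θ) (hθsupp : ∀ x : ℝ, x ∉ I → θ x = 0) :
    (cfc θ Δop * (Δ1 * (4 - Δ1) + Δ2 * (4 - Δ2)) * cfc θ Δop -
      ((ε * (4 - ε) : ℝ) : ℂ) • (cfc θ Δop) ^ 2).IsPositive := by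
  set S : Fin 2 → (l2Z2 →L[ℂ] l2Z2) := fun i => l2Translate (Pi.single i 1)
  have hΔ₁ : Δ1 = 2 - S 0 - star (S 0) := eq_two_sub_l2Translate_sub_star 0 Δ1 hΔ1
  have hΔ₂ : Δ2 = 2 - S 1 - star (S 1) := eq_two_sub_l2Translate_sub_star 1 Δ2 hΔ2
  have hsum : Δop = Δ1 + Δ2 := by
    ext u n
    rw [hΔ, Fin.sum_univ_two, add_apply, lp.coeFn_add, Pi.add_apply, hΔ1, hΔ2]
  have hS : ∀ i, S i * star (S i) = 1 := fun i => l2Translate_mul_star _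
  have hS01 : Commute (S 0) (S 1) := l2Translate_commute _ _
  have hS01' : Commute (S 0) (star (S 1)) := by
    simpa only [S, star_l2Translate] using l2Translate_commute _ _
  have hsa : IsSelfAdjoint (Δ1 + Δ2) := by
    rw [hΔ₁, hΔ₂, two_sub_sub_star_eq_mul_star (hS 0), two_sub_sub_star_eq_mul_star (hS 1)]
    exact (IsSelfAdjoint.mul_star_self _).add (IsSelfAdjoint.mul_star_self _)
  rw [← ContinuousLinearMap.nonneg_iff_isPositive, Complex.coe_smul, hsum]
  rcases hI with rfl | rfl
  · refine strict_mourre_of_anticomm_nonneg Δ1 Δ2 hsa ?_ hθc hθsupp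
    rw [hΔ₁, hΔ₂]
    exact two_sub_sub_star_anticomm_nonneg (hS 0) (hS 1) hS01 hS01'
  · refine strict_mourre_of_anticomm_nonneg_reflected Δ1 Δ2 hsa ?_ hθc hθsupp
    rw [hΔ₁, hΔ₂]
    exact four_sub_two_sub_sub_star_anticomm_nonneg (hS 0) (hS 1) hS01 hS01'

/-- Strict Mourre estimate for the two-dimensional discrete Laplacian.
With B = Δ₁(4−Δ₁) + Δ₂(4−Δ₂) the bounded extension of [Δ, iA₀], for ε ∈ (0,2) and
I = (ε,4−ε) or I = (4+ε,8−ε), and any real continuous θ vanishing outside I,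
θ(Δ)·B·θ(Δ) ≥ ε(4−ε)·θ(Δ)². -/
theorem strict_mourre_2d (Δop Δ1 Δ2 : l2Z2 →L[ℂ] l2Z2)
    (hΔ : ∀ (u : l2Z2) (n : Fin 2 → ℤ), (Δop u) n = ∑ i : Fin 2,
      (2 * u n - u (Function.update n i (n i + 1)) - u (Function.update n i (n i - 1))))
    (hΔ1 : ∀ (u : l2Z2) (n : Fin 2 → ℤ), (Δ1 u) n =
      2 * u n - u (Function.update n 0 (n 0 + 1)) - u (Function.update n 0 (n 0 - 1)))
    (hΔ2 : ∀ (u : l2Z2) (n : Fin 2 → ℤ), (Δ2 u) n =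
      2 * u n - u (Function.update n 1 (n 1 + 1)) - u (Function.update n 1 (n 1 - 1)))
    (hΔsa : IsSelfAdjoint Δop)
    (ε : ℝ) (hε0 : 0 < ε) (hε2 : ε < 2) (I : Set ℝ)
    (hI : I = Set.Ioo ε (4 - ε) ∨ I = Set.Ioo (4 + ε) (8 - ε))
    (θ : ℝ → ℝ) (hθc : Continuous θ) (hθsupp : ∀ x : ℝ, x ∉ I → θ x = 0) :
    (cfc θ Δop * (Δ1 * (4 - Δ1) + Δ2 * (4 - Δ2)) * cfc θ Δop -
      ((ε * (4 - ε) : ℝ) : ℂ) • (cfc θ Δop) ^ 2).IsPositive :=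
  strict_mourre_2d_general Δop Δ1 Δ2 hΔ hΔ1 hΔ2 ε I hI θ hθc hθsupp
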